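/- arXiv:1911.10667 — 2 statements merged into one kernel-verified Lean document; each statement's English description precedes it below -/
import Mathlib

section
/- For 0 < a < 2, let 𝒱_a(x) = |x|^{−a} on ℝ² \ {0} and b = 1 + a/2, and let ψ(x) = min(1, max(2 − |x|, 0)) be a continuous radial cutoff. Define W := 𝒱_b·ψ and V_reg(x) := ∫_{ℝ²} |x−y|^{−b} |y|^{−b} (1 − ψ(x−y)ψ(y)) dy. Then V_reg is finite for every x ∈ ℝ² and is continuous at the origin, i.e. V_reg(x) → V_reg(0) as x → 0. -/
/-!
Because `ψ = 1` on the closed unit ball, the integrand vanishes where `‖x - y‖ ≤ 1` and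
`‖y‖ ≤ 1`. Elsewhere it is dominated by `‖y‖^{-b}` on `‖y‖ ≤ 1`, by `‖x - y‖^{-b}` on
`‖x - y‖ ≤ 1` (both integrable since `b < 2`), and, where both distances are bounded below, by a
multiple of `(1 + ‖y‖)^{-2b}`, integrable since `2b > 2`. For `‖x‖ ≤ 1/2` the integrand vanishes
unless both distances are at least `1/2`, so this last majorant is uniform near `0` and dominated
convergence gives continuity there.
-/

open MeasureTheory Filter Topology Metric

noncomputable section

abbrev E2 := EuclideanSpace ℝ (Fin 2)

open Module

structure IsUnitBallCutoff {E : Type*} [NormedAddCommGroup E] (ψ : E → ℝ) : Prop where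
  continuous : Continuous ψ
  nonneg : ∀ z, 0 ≤ ψ z
  le_one : ∀ z, ψ z ≤ 1
  eq_one_of_norm_le_one : ∀ z, ‖z‖ ≤ 1 → ψ z = 1

lemma isUnitBallCutoff_min_max {E : Type*} [NormedAddCommGroup E] :
    IsUnitBallCutoff fun x : E => min 1 (max (2 - ‖x‖) 0) where
  continuous := by fun_prop
  nonneg _ := le_min zero_le_one (le_max_right _ _)
  le_one _ := min_le_left _ _
  eq_one_of_norm_le_one _ hz := min_eq_left (le_max_of_le_left (by linarith))

lemma rpow_neg_mul_rpow_neg_le {u v w c : ℝ} (hw : 0 < w) (hu : w ≤ u) (hv : w ≤ v)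
    (hc : 0 ≤ c) : u ^ (-c) * v ^ (-c) ≤ w ^ (-(2 * c)) :=
  calc u ^ (-c) * v ^ (-c) ≤ w ^ (-c) * w ^ (-c) :=
        mul_le_mul (Real.rpow_le_rpow_of_nonpos hw hu (by linarith))
          (Real.rpow_le_rpow_of_nonpos hw hv (by linarith)) (Real.rpow_nonneg (hw.le.trans hv) _)
          (by positivity)
    _ = w ^ (-(2 * c)) := by rw [← Real.rpow_add hw]; ring_nf

section Kernel

variable {E : Type*} [NormedAddCommGroup E] {ψ : E → ℝ} {b : ℝ} {x y : E}

def regKernel (ψ : E → ℝ) (b : ℝ) (x y : E) : ℝ :=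
  ‖x - y‖ ^ (-b) * ‖y‖ ^ (-b) * (1 - ψ (x - y) * ψ y)

lemma regKernel_nonneg (hψ : IsUnitBallCutoff ψ) : 0 ≤ regKernel ψ b x y := by
  have : 0 ≤ 1 - ψ (x - y) * ψ y :=
    sub_nonneg.2 (mul_le_one₀ (hψ.le_one _) (hψ.nonneg _) (hψ.le_one _))
  unfold regKernel; positivity

lemma regKernel_le (hψ : IsUnitBallCutoff ψ) :
    regKernel ψ b x y ≤ ‖x - y‖ ^ (-b) * ‖y‖ ^ (-b) :=
  mul_le_of_le_one_right (by positivity) (sub_le_self _ (mul_nonneg (hψ.nonneg _) (hψ.nonneg _)))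

lemma regKernel_eq_zero (hψ : IsUnitBallCutoff ψ) (hxy : ‖x - y‖ ≤ 1) (hy : ‖y‖ ≤ 1) :
    regKernel ψ b x y = 0 := by
  simp [regKernel, hψ.eq_one_of_norm_le_one _ hxy, hψ.eq_one_of_norm_le_one _ hy]

lemma regKernel_le_of_le_norm (hψ : IsUnitBallCutoff ψ) (hb : 0 ≤ b) {r s K : ℝ} (hr : 0 < r)
    (hK : 1 + s + r ≤ K * r) (hx : ‖x‖ ≤ s) (hxy : r ≤ ‖x - y‖) (hy : r ≤ ‖y‖) :
    regKernel ψ b x y ≤ K ^ (2 * b) * (1 + ‖y‖) ^ (-(2 * b)) := by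
  have hK1 : 0 < K - 1 := pos_of_mul_pos_left (by linarith [norm_nonneg x]) hr.le
  have hK0 : 0 < K := by linarith
  have hy' : ‖y‖ ≤ ‖x‖ + ‖x - y‖ := by simpa using norm_sub_le x (x - y)
  have hxyK : (1 + ‖y‖) / K ≤ ‖x - y‖ := by
    rw [div_le_iff₀ hK0]; nlinarith [mul_le_mul_of_nonneg_left hxy hK1.le]
  have hyK : (1 + ‖y‖) / K ≤ ‖y‖ := by
    rw [div_le_iff₀ hK0]; nlinarith [mul_le_mul_of_nonneg_left hy hK1.le, norm_nonneg x]
  calc regKernel ψ b x y ≤ ‖x - y‖ ^ (-b) * ‖y‖ ^ (-b) := regKernel_le hψ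
    _ ≤ ((1 + ‖y‖) / K) ^ (-(2 * b)) := rpow_neg_mul_rpow_neg_le (by positivity) hxyK hyK hb
    _ = K ^ (2 * b) * (1 + ‖y‖) ^ (-(2 * b)) := by
      rw [Real.div_rpow (by positivity) hK0.le, Real.rpow_neg hK0.le, div_inv_eq_mul, mul_comm]

lemma regKernel_le_of_norm_le_half (hψ : IsUnitBallCutoff ψ) (hb : 0 ≤ b)
    (hx : ‖x‖ ≤ 1 / 2) : regKernel ψ b x y ≤ 4 ^ (2 * b) * (1 + ‖y‖) ^ (-(2 * b)) := by
  by_cases h : ‖x - y‖ ≤ 1 ∧ ‖y‖ ≤ 1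
  · rw [regKernel_eq_zero hψ h.1 h.2]; positivity
  have hy' : ‖y‖ ≤ ‖x‖ + ‖x - y‖ := by simpa using norm_sub_le x (x - y)
  have hxy' : ‖x - y‖ ≤ ‖x‖ + ‖y‖ := norm_sub_le x y
  obtain ⟨hxy, hy⟩ : 1 / 2 ≤ ‖x - y‖ ∧ 1 / 2 ≤ ‖y‖ := by
    rw [not_and_or, not_le, not_le] at h
    rcases h with h | h <;> constructor <;> linarith
  exact regKernel_le_of_le_norm hψ hb (by norm_num) (by norm_num) hx hxy hy

lemma regKernel_le_local_add_far (hψ : IsUnitBallCutoff ψ) (hb : 0 ≤ b) :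
    regKernel ψ b x y ≤ (closedBall (0 : E) 1).indicator (fun z => ‖z‖ ^ (-b)) y
      + (closedBall (0 : E) 1).indicator (fun z => ‖z‖ ^ (-b)) (x - y)
      + (2 + ‖x‖) ^ (2 * b) * (1 + ‖y‖) ^ (-(2 * b)) := by
  have hg : ∀ z : E, 0 ≤ (closedBall (0 : E) 1).indicator (fun z => ‖z‖ ^ (-b)) z :=
    Set.indicator_nonneg fun z _ => by positivity
  have hfar : 0 ≤ (2 + ‖x‖) ^ (2 * b) * (1 + ‖y‖) ^ (-(2 * b)) := by positivity
  have hg_y := hg y; have hg_xy := hg (x - y)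
  rcases le_or_gt ‖y‖ 1 with hy | hy <;> rcases le_or_gt ‖x - y‖ 1 with hxy | hxy
  · rw [regKernel_eq_zero hψ hxy hy]; positivity
  · have : regKernel ψ b x y ≤ ‖y‖ ^ (-b) := (regKernel_le hψ).trans
      (mul_le_of_le_one_left (by positivity)
        (Real.rpow_le_one_of_one_le_of_nonpos hxy.le (by linarith)))
    rw [Set.indicator_of_mem (mem_closedBall_zero_iff.2 hy)]
    linarith
  · have : regKernel ψ b x y ≤ ‖x - y‖ ^ (-b) := (regKernel_le hψ).trans
      (mul_le_of_le_one_right (by positivity)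
        (Real.rpow_le_one_of_one_le_of_nonpos hy.le (by linarith)))
    rw [Set.indicator_of_mem (mem_closedBall_zero_iff.2 hxy) (fun z => ‖z‖ ^ (-b))]
    linarith
  · have := regKernel_le_of_le_norm hψ hb (s := ‖x‖) (K := 2 + ‖x‖) one_pos (by linarith)
      le_rfl hxy.le hy.le
    linarith

lemma continuousAt_regKernel (hψ : Continuous ψ) (h : x ≠ y) :
    ContinuousAt (fun x => regKernel ψ b x y) x := by
  have : ‖x - y‖ ≠ 0 := norm_ne_zero_iff.2 (sub_ne_zero.2 h)
  exact (((continuous_id.sub continuous_const).norm.continuousAt.rpow_const (.inl this)).mul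
    continuousAt_const).mul (by fun_prop)

variable [MeasurableSpace E] [BorelSpace E]

lemma measurable_regKernel (hψ : Measurable ψ) : Measurable (regKernel ψ b x) := by
  unfold regKernel; fun_prop

variable [NormedSpace ℝ E] [FiniteDimensional ℝ E] [Nontrivial E] {μ : Measure E}
  [μ.IsAddHaarMeasure]

lemma integrable_indicator_closedBall_norm_rpow (hb : b < finrank ℝ E) :
    Integrable ((closedBall (0 : E) 1).indicator fun z => ‖z‖ ^ (-b)) μ := by
  have hloc : LocallyIntegrable (fun z : E => ‖z‖ ^ (-b)) μ :=
    locallyIntegrable_of_norm_le_rpow finrank_pos hb (C := 1)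
      (ae_of_all _ fun z => by rw [one_mul, Real.norm_of_nonneg (by positivity)])
      (measurable_norm.pow_const _).aestronglyMeasurable
  exact (hloc.integrableOn_isCompact (isCompact_closedBall 0 1)).integrable_indicator
    measurableSet_closedBall

lemma integrable_regKernel (hψ : IsUnitBallCutoff ψ) (hb : b < finrank ℝ E)
    (hb' : finrank ℝ E < 2 * b) (x : E) : Integrable (regKernel ψ b x) μ := by
  have hb0 : 0 ≤ b := by linarith [(finrank ℝ E).cast_nonneg (α := ℝ)]
  have hg := integrable_indicator_closedBall_norm_rpow (μ := μ) hb
  have hfar := (integrable_one_add_norm (μ := μ) hb').const_mul ((2 + ‖x‖) ^ (2 * b))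
  refine ((hg.add (hg.comp_sub_left x)).add hfar).mono'
    (measurable_regKernel hψ.continuous.measurable).aestronglyMeasurable (ae_of_all _ fun y => ?_)
  rw [Real.norm_of_nonneg (regKernel_nonneg hψ)]
  exact regKernel_le_local_add_far hψ hb0

lemma continuousAt_integral_regKernel_zero (hψ : IsUnitBallCutoff ψ)
    (hb : finrank ℝ E < 2 * b) : ContinuousAt (fun x => ∫ y, regKernel ψ b x y ∂μ) 0 := by
  have hb0 : 0 ≤ b := by linarith [(finrank ℝ E).cast_nonneg (α := ℝ)]
  refine continuousAt_of_dominated (bound := fun y => 4 ^ (2 * b) * (1 + ‖y‖) ^ (-(2 * b)))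
    (.of_forall fun x => (measurable_regKernel hψ.continuous.measurable).aestronglyMeasurable)
    ?_ ((integrable_one_add_norm hb).const_mul _) ?_
  · filter_upwards [closedBall_mem_nhds (0 : E) (by norm_num : (0 : ℝ) < 1 / 2)] with x hx
    refine ae_of_all _ fun y => ?_
    rw [Real.norm_of_nonneg (regKernel_nonneg hψ)]
    exact regKernel_le_of_norm_le_half hψ hb0 (mem_closedBall_zero_iff.1 hx)
  · filter_upwards [compl_mem_ae_iff.2 (measure_singleton (0 : E))] with y hy
    exact continuousAt_regKernel hψ.continuous (Ne.symm hy)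

end Kernel

theorem stmt6 (a : ℝ) (ha : 0 < a) (ha2 : a < 2) (b : ℝ) (hb : b = 1 + a / 2)
    (ψ : E2 → ℝ) (hψ : ∀ x, ψ x = min 1 (max (2 - ‖x‖) 0))
    (Vreg : E2 → ℝ)
    (hVreg : ∀ x, Vreg x =
      ∫ y, ‖x - y‖ ^ (-b) * ‖y‖ ^ (-b) * (1 - ψ (x - y) * ψ y)) :
    (∀ x : E2, Integrable
      (fun y => ‖x - y‖ ^ (-b) * ‖y‖ ^ (-b) * (1 - ψ (x - y) * ψ y))) ∧
    ContinuousAt Vreg 0 := by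
  have hψ' : IsUnitBallCutoff ψ := by
    rw [show ψ = _ from funext hψ]
    exact isUnitBallCutoff_min_max
  have hdim : (finrank ℝ E2 : ℝ) = 2 := by simp
  have hb_lt : b < finrank ℝ E2 := by rw [hdim, hb]; linarith
  have hb_gt : (finrank ℝ E2 : ℝ) < 2 * b := by rw [hdim, hb]; linarith
  refine ⟨integrable_regKernel hψ' hb_lt hb_gt, ?_⟩
  rw [show Vreg = fun x => ∫ y, regKernel ψ b x y from funext hVreg]
  exact continuousAt_integral_regKernel_zero hψ' hb_gt
end
end

section
/- Let U : ℝ² → [0,∞] be radially symmetric, radially non-increasing, locally integrable, and continuous away from 0. Let Λ = rℤ² be a square lattice in ℝ² with spacing r > 0, let x ∈ ℝ², and let 0 < ε < 1. Then there exists a constant C > 0 depending only on the lattice structure (not on r, x, ε, or U) such that r² Σ_{y ∈ Λ ∩ B(x,ε), y ≠ x, |x−y| ≥ r} U(x − y) ≤ C ∫_{B(0, ε + r)} U(z) dz. -/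
open MeasureTheory Filter Topology Metric

noncomputable section

/-- The point `r • m` of the square lattice `r ℤ²` in `ℝ²`. -/
def latticePt (r : ℝ) (m : Fin 2 → ℤ) : E2 :=
  r • (WithLp.equiv 2 (Fin 2 → ℝ)).symm (fun i => (m i : ℝ))

/-!
Match each lattice point `y` with `r ≤ ‖x - y‖` to the ball of radius `r / 4` inside
`B(0, ‖x - y‖)` whose boundary passes through `x - y`. On that ball `U ≥ U (x - y)` by radial
monotonicity, its area is `π r² / 16`, and these balls are pairwise disjoint because each lies in
`B(x - y, r / 2)` and distinct lattice points are `r`-separated; this gives `C = 16 / π`.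
-/

open Function
open scoped ENNReal

section BallTowardOrigin

variable {E : Type*} [NormedAddCommGroup E] [NormedSpace ℝ E]

def ballTowardOrigin (w : E) (ρ : ℝ) : Set E :=
  ball ((1 - ρ / ‖w‖) • w) ρ

variable {w : E} {ρ : ℝ}

lemma ballTowardOrigin_subset_ball_zero (hρ : 0 < ρ) (hρw : ρ ≤ ‖w‖) :
    ballTowardOrigin w ρ ⊆ ball 0 ‖w‖ := by
  intro z hz
  have hw : 0 < ‖w‖ := hρ.trans_le hρw
  have hcenter : dist ((1 - ρ / ‖w‖) • w) 0 = ‖w‖ - ρ := by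
    rw [dist_zero_right, norm_smul,
      Real.norm_of_nonneg (sub_nonneg.2 ((div_le_one hw).2 hρw))]
    field_simp
  have := mem_ball.1 hz
  exact mem_ball.2 ((dist_triangle _ _ _).trans_lt (by linarith))

lemma ballTowardOrigin_subset_ball_self (hρ : 0 < ρ) (hρw : ρ ≤ ‖w‖) :
    ballTowardOrigin w ρ ⊆ ball w (2 * ρ) := by
  intro z hz
  have hw : 0 < ‖w‖ := hρ.trans_le hρw
  have hcenter : dist ((1 - ρ / ‖w‖) • w) w = ρ := by
    rw [dist_eq_norm, sub_smul, one_smul, sub_sub_cancel_left, norm_neg, norm_smul,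
      Real.norm_of_nonneg (by positivity)]
    field_simp
  have := mem_ball.1 hz
  exact mem_ball.2 ((dist_triangle _ _ _).trans_lt (by linarith))

end BallTowardOrigin

lemma tsum_mul_measure_le_setLIntegral {α ι : Type*} [MeasurableSpace α] [Countable ι]
    {μ : Measure α} {s : ι → Set α} {S : Set α} {c : ι → ℝ≥0∞} {g : α → ℝ≥0∞}
    (hs : ∀ i, MeasurableSet (s i)) (hd : Pairwise (Disjoint on s)) (hS : ∀ i, s i ⊆ S)
    (hc : ∀ i, ∀ z ∈ s i, c i ≤ g z) :
    ∑' i, c i * μ (s i) ≤ ∫⁻ z in S, g z ∂μ :=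
  calc ∑' i, c i * μ (s i) = ∑' i, ∫⁻ _ in s i, c i ∂μ := by simp_rw [setLIntegral_const]
    _ ≤ ∑' i, ∫⁻ z in s i, g z ∂μ :=
      ENNReal.tsum_le_tsum fun i => setLIntegral_mono' (hs i) (hc i)
    _ = ∫⁻ z in ⋃ i, s i, g z ∂μ := (lintegral_iUnion hs hd g).symm
    _ ≤ ∫⁻ z in S, g z ∂μ := lintegral_mono_set (Set.iUnion_subset hS)

lemma tsum_radial_mul_measure_le_lintegral {E ι : Type*} [NormedAddCommGroup E]
    [NormedSpace ℝ E] [MeasurableSpace E] [OpensMeasurableSpace E] [Countable ι]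
    {μ : Measure E} {U : E → ℝ} {f : ℝ → ℝ} (hUf : ∀ z, U z = f ‖z‖)
    (hf : AntitoneOn f (Set.Ici 0)) {w : ι → E} {ρ R : ℝ} (hρ : 0 < ρ)
    (hsep : Pairwise fun i j => 4 * ρ ≤ dist (w i) (w j)) (hρw : ∀ i, ρ ≤ ‖w i‖)
    (hwR : ∀ i, ‖w i‖ ≤ R) :
    ∑' i, ENNReal.ofReal (U (w i)) * μ (ballTowardOrigin (w i) ρ)
      ≤ ∫⁻ z in ball 0 R, ENNReal.ofReal (U z) ∂μ := by
  refine tsum_mul_measure_le_setLIntegral (fun i => measurableSet_ball) ?_ ?_ ?_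
  · intro i j hij
    refine Set.disjoint_left.2 fun z hzi hzj => ?_
    have hi := mem_ball.1 (ballTowardOrigin_subset_ball_self hρ (hρw i) hzi)
    have hj := mem_ball.1 (ballTowardOrigin_subset_ball_self hρ (hρw j) hzj)
    linarith [hsep hij, dist_triangle_left (w i) (w j) z]
  · exact fun i =>
      (ballTowardOrigin_subset_ball_zero hρ (hρw i)).trans (ball_subset_ball (hwR i))
  · intro i z hz
    have hzw := mem_ball_zero_iff.1 (ballTowardOrigin_subset_ball_zero hρ (hρw i) hz)
    refine ENNReal.ofReal_le_ofReal ?_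
    rw [hUf, hUf]
    exact hf (norm_nonneg _) (norm_nonneg _) hzw.le

lemma le_dist_latticePt {r : ℝ} (hr : 0 ≤ r) {m m' : Fin 2 → ℤ} (h : m ≠ m') :
    r ≤ dist (latticePt r m) (latticePt r m') := by
  obtain ⟨i, hi⟩ := Function.ne_iff.1 h
  have hcoord : r ≤ dist (latticePt r m i) (latticePt r m' i) := by
    have hone : (1 : ℝ) ≤ |(m i : ℝ) - m' i| := by
      exact_mod_cast Int.one_le_abs (sub_ne_zero.2 hi)
    have : latticePt r m i - latticePt r m' i = r * ((m i : ℝ) - m' i) := by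
      simp only [latticePt, WithLp.equiv_symm_apply, PiLp.smul_apply, smul_eq_mul]
      ring
    rw [Real.dist_eq, this, abs_mul, abs_of_nonneg hr]
    exact le_mul_of_one_le_right hr hone
  exact hcoord.trans (PiLp.dist_apply_le _ _ i)

lemma tsum_mul_toReal_le_of_tsum_ofReal_mul_le {ι : Type*} {a : ι → ℝ} (ha : ∀ i, 0 ≤ a i)
    {c : ℝ≥0∞} {I : ℝ} (hI : 0 ≤ I)
    (h : ∑' i, ENNReal.ofReal (a i) * c ≤ ENNReal.ofReal I) :
    (∑' i, a i) * c.toReal ≤ I := by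
  rw [ENNReal.tsum_mul_right] at h
  have := ENNReal.toReal_le_of_le_ofReal hI h
  rwa [ENNReal.toReal_mul, ENNReal.tsum_toReal_eq fun _ => ENNReal.ofReal_ne_top,
    tsum_congr fun i => ENNReal.toReal_ofReal (ha i)] at this

theorem stmt12 :
    ∃ C : ℝ, 0 < C ∧
      ∀ (r : ℝ), 0 < r → ∀ (x : E2) (ε : ℝ), 0 < ε → ε < 1 →
      ∀ (U : E2 → ℝ) (f : ℝ → ℝ),
        (∀ z, U z = f ‖z‖) → AntitoneOn f (Set.Ici 0) → (∀ z, 0 ≤ U z) →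
        LocallyIntegrable U volume → ContinuousOn U {(0 : E2)}ᶜ →
        r ^ 2 * (∑' m : {m : Fin 2 → ℤ // latticePt r m ∈ ball x ε ∧
            latticePt r m ≠ x ∧ r ≤ dist x (latticePt r m)},
            U (x - latticePt r m.1))
          ≤ C * ∫ z in ball (0 : E2) (ε + r), U z := by
  refine ⟨16 / Real.pi, by positivity, ?_⟩
  intro r hr x ε _ _ U f hUf hf hU0 hUloc _
  have hInt : IntegrableOn U (ball (0 : E2) (ε + r)) :=
    (hUloc.integrableOn_isCompact (isCompact_closedBall 0 _)).mono_set ball_subset_closedBall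
  have hsum := tsum_radial_mul_measure_le_lintegral (μ := volume) (R := ε + r) hUf hf
    (w := fun m : {m : Fin 2 → ℤ // latticePt r m ∈ ball x ε ∧
      latticePt r m ≠ x ∧ r ≤ dist x (latticePt r m)} => x - latticePt r m.1)
    (by positivity : 0 < r / 4)
    (fun m m' hmm' => by
      dsimp only
      rw [dist_sub_left]
      linarith [le_dist_latticePt hr.le (Subtype.val_injective.ne hmm')])
    (fun m => by
      rw [← dist_eq_norm]
      linarith [m.2.2.2])
    (fun m => by
      rw [← dist_eq_norm, dist_comm]
      linarith [mem_ball.1 m.2.1])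
  rw [← ofReal_integral_eq_lintegral_ofReal hInt (.of_forall hU0)] at hsum
  simp only [ballTowardOrigin, EuclideanSpace.volume_ball_fin_two] at hsum
  have hreal := tsum_mul_toReal_le_of_tsum_ofReal_mul_le (fun _ => hU0 _)
    (setIntegral_nonneg measurableSet_ball fun z _ => hU0 z) hsum
  simp only [ENNReal.toReal_mul, ENNReal.toReal_pow,
    ENNReal.toReal_ofReal (by positivity : 0 ≤ r / 4),
    ENNReal.toReal_ofReal Real.pi_pos.le] at hreal
  rw [div_mul_eq_mul_div, le_div_iff₀ Real.pi_pos]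
  linarith
end
end
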